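/- arXiv:1910.08174 — 4 statements merged into one kernel-verified Lean document; each statement's English description precedes it below -/
import Mathlib

section
/- For every r with σ_r > 0, the Hilbert–Schmidt norm errors satisfy ‖LK − LΠ_r^X K‖²_{HS(S,Y)} = Σ_{r < k ≤ s_X} σ_k² ‖Lφ_k‖²_Y and ‖LK − Π_r^Y LK‖²_{HS(S,Y)} = Σ_{r < k ≤ s_X} σ_k² ‖Lφ_k − Π_r^Y Lφ_k‖²_Y. Moreover, if s_X = ∞, then ‖LK − LΠ_r^X K‖_{HS(S,Y)} → 0 as r → ∞, and if in addition sup_r ‖Π_r^Y‖ < ∞, then ‖LK − Π_r^Y LK‖_{HS(S,Y)} → 0 as r → ∞. -/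
/-!
Orthonormality of `f` turns the SVD into `K f_k = σ_k φ_k` for every `k` (both sides vanish when
`σ_k = 0`). Hence `Π_r^X` fixes `K f_k` for `k < r` and, by orthonormality of the `φ_k`, kills it
for `k ≥ r`, while `Π_r^Y` fixes `L K f_k` for `k < r`. Each Hilbert–Schmidt error is therefore a
sum over the tail `k ≥ r` only. The tails of the summable series `∑ ‖L K f_k‖²` tend to `0`, and
`‖y - Π_r^Y y‖ ≤ (1 + ‖Π_r^Y‖) ‖y‖` bounds the second error by a multiple of the first.
-/

open Filter Finset Topology

theorem tsum_eq_tsum_nat_add_of_eq_zero {α : Type*} [AddCommMonoid α] [TopologicalSpace α]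
    {g : ℕ → α} {r : ℕ} (h : ∀ k < r, g k = 0) : ∑' k, g k = ∑' k, g (r + k) := by
  refine ((add_right_injective r).tsum_eq fun k hk => ?_).symm
  have hrk : r ≤ k := not_lt.mp fun hkr => hk (h k hkr)
  exact ⟨k - r, Nat.add_sub_cancel' hrk⟩

theorem norm_ofReal_smul_sq {𝕜 E : Type*} [RCLike 𝕜] [NormedAddCommGroup E] [NormedSpace 𝕜 E]
    (c : ℝ) (y : E) : ‖(c : 𝕜) • y‖ ^ 2 = c ^ 2 * ‖y‖ ^ 2 := by
  rw [norm_smul, RCLike.norm_ofReal, mul_pow, sq_abs]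

theorem Orthonormal.apply_eq_smul_of_eq_tsum {𝕜 ι S X : Type*} [RCLike 𝕜]
    [NormedAddCommGroup S] [InnerProductSpace 𝕜 S] [AddCommMonoid X] [Module 𝕜 X]
    [TopologicalSpace X]
    {f : ι → S} (hf : Orthonormal 𝕜 f) {T : S → X} {c : ι → 𝕜} {φ : ι → X}
    (hT : ∀ g, T g = ∑' k, (c k * inner 𝕜 (f k) g) • φ k) (k : ι) :
    T (f k) = c k • φ k := by
  rw [hT, tsum_eq_single k fun j hj => by rw [hf.inner_eq_zero hj, mul_zero, zero_smul],
    inner_self_eq_norm_sq_to_K, hf.1 k]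
  simp

theorem tsum_norm_sub_apply_sq_le {𝕜 ι E : Type*} [RCLike 𝕜] [NormedAddCommGroup E]
    [NormedSpace 𝕜 E] (T : E →L[𝕜] E) {u : ι → E} (hu : Summable fun k => ‖u k‖ ^ 2) :
    ∑' k, ‖u k - T (u k)‖ ^ 2 ≤ (1 + ‖T‖) ^ 2 * ∑' k, ‖u k‖ ^ 2 := by
  have hle : ∀ k, ‖u k - T (u k)‖ ^ 2 ≤ (1 + ‖T‖) ^ 2 * ‖u k‖ ^ 2 := fun k => by
    rw [← mul_pow]
    gcongr
    calc ‖u k - T (u k)‖ ≤ ‖u k‖ + ‖T‖ * ‖u k‖ :=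
          (norm_sub_le _ _).trans (by gcongr; exact T.le_opNorm _)
      _ = (1 + ‖T‖) * ‖u k‖ := by ring
  have hbound : Summable fun k => (1 + ‖T‖) ^ 2 * ‖u k‖ ^ 2 := hu.mul_left _
  rw [← tsum_mul_left]
  exact (hbound.of_nonneg_of_le (fun k => by positivity) hle).tsum_le_tsum hle hbound

section Truncation

variable {𝕜 X Y : Type*} [RCLike 𝕜] [NormedAddCommGroup X] [InnerProductSpace 𝕜 X]
  [NormedAddCommGroup Y] [NormedSpace 𝕜 Y]

theorem sum_range_inner_smul_eq_ite {φ : ℕ → X} {r k : ℕ}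
    (hφ : ∀ j < r, inner 𝕜 (φ j) (φ k) = if j = k then 1 else 0) :
    ∑ j ∈ range r, inner 𝕜 (φ j) (φ k) • φ j = if k < r then φ k else 0 := by
  rw [sum_congr rfl fun j hj => by rw [hφ j (mem_range.mp hj), ite_smul, one_smul, zero_smul]]
  rw [sum_ite_eq' (range r) k φ]
  simp only [mem_range]

variable {σ : ℕ → ℝ} {φ x : ℕ → X} {r : ℕ}

theorem sum_range_inner_smul_eq_ite_of_eq_smul (hx : ∀ k, x k = (σ k : 𝕜) • φ k)
    (hσ : ∀ k, 0 ≤ σ k)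
    (hφ : ∀ j k, 0 < σ j → 0 < σ k → inner 𝕜 (φ j) (φ k) = if j = k then 1 else 0)
    (hr : ∀ k < r, 0 < σ k) (k : ℕ) :
    ∑ j ∈ range r, inner 𝕜 (φ j) (x k) • φ j = if k < r then x k else 0 := by
  rcases (hσ k).eq_or_lt with hσk | hσk
  · simp [hx, ← hσk]
  · simp_rw [hx, inner_smul_right, mul_smul, ← smul_sum,
      sum_range_inner_smul_eq_ite fun j hj => hφ j k (hr j hj) hσk, smul_ite, smul_zero]

theorem tsum_norm_sub_sum_range_inner_smul_sq_eq_tsum_nat_add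
    (hx : ∀ k, x k = (σ k : 𝕜) • φ k) (L : X →ₗ[𝕜] Y) (hσ : ∀ k, 0 ≤ σ k)
    (hφ : ∀ j k, 0 < σ j → 0 < σ k → inner 𝕜 (φ j) (φ k) = if j = k then 1 else 0)
    (hr : ∀ k < r, 0 < σ k) :
    ∑' k, ‖L (x k) - L (∑ j ∈ range r, inner 𝕜 (φ j) (x k) • φ j)‖ ^ 2
      = ∑' k, ‖L (x (r + k))‖ ^ 2 := by
  simp_rw [sum_range_inner_smul_eq_ite_of_eq_smul hx hσ hφ hr]
  rw [tsum_eq_tsum_nat_add_of_eq_zero (r := r) fun k hk => by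
    rw [if_pos hk, sub_self, norm_zero, zero_pow two_ne_zero]]
  simp only [add_lt_iff_neg_left, not_lt_zero, if_false, map_zero, sub_zero]

theorem tsum_norm_sub_apply_sq_eq_tsum_nat_add (hx : ∀ k, x k = (σ k : 𝕜) • φ k)
    (L : X →ₗ[𝕜] Y) (P : Y →L[𝕜] Y)
    (hP : ∀ k < r, P (L (φ k)) = L (φ k)) :
    ∑' k, ‖L (x k) - P (L (x k))‖ ^ 2 = ∑' k, ‖L (x (r + k)) - P (L (x (r + k)))‖ ^ 2 :=
  tsum_eq_tsum_nat_add_of_eq_zero fun k hk => by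
    rw [hx, map_smul, map_smul, hP k hk, sub_self, norm_zero, zero_pow two_ne_zero]

end Truncation

theorem stmt2_general
    {𝕜 : Type*} [RCLike 𝕜]
    {S X Y : Type*}
    [NormedAddCommGroup S] [InnerProductSpace 𝕜 S]
    [NormedAddCommGroup X] [InnerProductSpace 𝕜 X]
    [NormedAddCommGroup Y] [InnerProductSpace 𝕜 Y]
    (K : S →L[𝕜] X)
    (σ : ℕ → ℝ) (hσnn : ∀ k, 0 ≤ σ k)
    (f : HilbertBasis ℕ 𝕜 S) (φ : ℕ → X)
    (hφON : ∀ j k, 0 < σ j → 0 < σ k →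
      (inner 𝕜 (φ j) (φ k) : 𝕜) = if j = k then 1 else 0)
    (hSVD : ∀ g : S, K g = ∑' k, ((σ k : 𝕜) * (inner 𝕜 (f k) g : 𝕜)) • φ k)
    (sX : ℕ∞) (hsX : ∀ k, 0 < σ k ↔ (k : ℕ∞) < sX)
    (L : X →ₗ[𝕜] Y)
    (hHS : Summable fun k => ‖L (K (f k))‖ ^ 2)
    (P : ℕ → Y →L[𝕜] Y)
    (hPfix : ∀ r, (∀ k < r, 0 < σ k) → ∀ k < r, P r (L (φ k)) = L (φ k)) :
    (∀ r, (∀ k < r, 0 < σ k) →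
      (∑' k, ‖L (K (f k)) -
          L (∑ j ∈ Finset.range r, (inner 𝕜 (φ j) (K (f k)) : 𝕜) • φ j)‖ ^ 2
        = ∑' k, σ (r + k) ^ 2 * ‖L (φ (r + k))‖ ^ 2)
      ∧ (∑' k, ‖L (K (f k)) - P r (L (K (f k)))‖ ^ 2
        = ∑' k, σ (r + k) ^ 2 * ‖L (φ (r + k)) - P r (L (φ (r + k)))‖ ^ 2))
    ∧ (sX = ⊤ →
        Tendsto (fun r => ∑' k, ‖L (K (f k)) -
            L (∑ j ∈ Finset.range r, (inner 𝕜 (φ j) (K (f k)) : 𝕜) • φ j)‖ ^ 2)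
          atTop (nhds 0)
        ∧ ((∃ C, ∀ r, ‖P r‖ ≤ C) →
          Tendsto (fun r => ∑' k, ‖L (K (f k)) - P r (L (K (f k)))‖ ^ 2)
            atTop (nhds 0))) := by
  have hx : ∀ k, K (f k) = (σ k : 𝕜) • φ k := f.orthonormal.apply_eq_smul_of_eq_tsum hSVD
  have hnorm : ∀ k, ‖L (K (f k))‖ ^ 2 = σ k ^ 2 * ‖L (φ k)‖ ^ 2 := fun k => by
    rw [hx, map_smul, norm_ofReal_smul_sq]
  have hnormP : ∀ r k, ‖L (K (f k)) - P r (L (K (f k)))‖ ^ 2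
      = σ k ^ 2 * ‖L (φ k) - P r (L (φ k))‖ ^ 2 := fun r k => by
    rw [hx, map_smul, map_smul, ← smul_sub, norm_ofReal_smul_sq]
  have herr₁ := fun r (hr : ∀ k < r, 0 < σ k) =>
    tsum_norm_sub_sum_range_inner_smul_sq_eq_tsum_nat_add (x := fun k => K (f k)) hx L hσnn
      hφON hr
  have herr₂ := fun r (hr : ∀ k < r, 0 < σ k) =>
    tsum_norm_sub_apply_sq_eq_tsum_nat_add (x := fun k => K (f k)) hx L (P r) (hPfix r hr)
  have htail : Tendsto (fun r => ∑' k, ‖L (K (f (r + k)))‖ ^ 2) atTop (𝓝 0) := by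
    simpa only [add_comm] using tendsto_sum_nat_add fun k => ‖L (K (f k))‖ ^ 2
  refine ⟨fun r hr => ⟨?_, ?_⟩, fun hsX_top => ?_⟩
  · rw [herr₁ r hr]
    simp only [hnorm]
  · rw [herr₂ r hr]
    simp only [hnormP]
  have hpos : ∀ r, ∀ k < r, 0 < σ k := fun _ k _ =>
    (hsX k).mpr (hsX_top ▸ ENat.natCast_lt_top k)
  refine ⟨by simpa only [herr₁ _ (hpos _)] using htail, fun ⟨C, hC⟩ => ?_⟩
  refine squeeze_zero (fun r => tsum_nonneg fun k => sq_nonneg _) (fun r => ?_)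
    (by simpa using htail.const_mul ((1 + C) ^ 2))
  rw [herr₂ r (hpos r)]
  have htail_summable : Summable fun k => ‖L (K (f (r + k)))‖ ^ 2 := by
    simpa only [add_comm] using (summable_nat_add_iff r).mpr hHS
  exact (tsum_norm_sub_apply_sq_le (P r) htail_summable).trans (by gcongr; exact hC r)

/-- Abstract SVD/POD setting (0-based indexing: the paper's
`σ_k, f_k, φ_k` for `k ≥ 1` correspond to `σ (k-1)` etc.; "σ_r > 0" becomes
`∀ k < r, 0 < σ k`; "Σ_{r < k ≤ s_X}" becomes `∑' k, … (r + k) …`, the terms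
with `σ = 0` vanishing).  `Π_r^X x = ∑_{k<r} (x,φ_k) φ_k` and `Π_r^Y = P r` is a
(not necessarily orthogonal) bounded projection onto `Y_r = span{Lφ_k : k < r}`.
Hilbert–Schmidt norms are computed with respect to the orthonormal basis `f` of
`S`.  Conclusions: the two exact Hilbert–Schmidt error formulas, and for
`s_X = ∞` the convergence of the first error to `0`, and of the second provided
`sup_r ‖Π_r^Y‖ < ∞`. -/
theorem stmt2
    {𝕜 : Type*} [RCLike 𝕜]
    {S X Y : Type*}
    [NormedAddCommGroup S] [InnerProductSpace 𝕜 S] [CompleteSpace S] [SecondCountableTopology S]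
    [NormedAddCommGroup X] [InnerProductSpace 𝕜 X] [CompleteSpace X] [SecondCountableTopology X]
    [NormedAddCommGroup Y] [InnerProductSpace 𝕜 Y] [CompleteSpace Y] [SecondCountableTopology Y]
    (K : S →L[𝕜] X) (hKcpt : IsCompactOperator K)
    (σ : ℕ → ℝ) (hσmono : Antitone σ) (hσnn : ∀ k, 0 ≤ σ k)
    (f : HilbertBasis ℕ 𝕜 S) (φ : ℕ → X)
    (hφON : ∀ j k, 0 < σ j → 0 < σ k →
      (inner 𝕜 (φ j) (φ k) : 𝕜) = if j = k then 1 else 0)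
    (hSVD : ∀ g : S, K g = ∑' k, ((σ k : 𝕜) * (inner 𝕜 (f k) g : 𝕜)) • φ k)
    (hKf : ∀ k, 0 < σ k → K (f k) = (σ k : 𝕜) • φ k)
    (hKadj : ∀ k, 0 < σ k →
      ContinuousLinearMap.adjoint K (φ k) = (σ k : 𝕜) • (f k : S))
    (sX : ℕ∞) (hsX : ∀ k, 0 < σ k ↔ (k : ℕ∞) < sX)
    (L : X →ₗ[𝕜] Y)
    (hHS : Summable fun k => ‖L (K (f k))‖ ^ 2)
    (P : ℕ → Y →L[𝕜] Y)
    (hPfix : ∀ r, (∀ k < r, 0 < σ k) → ∀ k < r, P r (L (φ k)) = L (φ k))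
    (hPrange : ∀ r, (∀ k < r, 0 < σ k) → ∀ y : Y,
      P r y ∈ Submodule.span 𝕜 ((fun k => L (φ k)) '' Set.Iio r)) :
    (∀ r, (∀ k < r, 0 < σ k) →
      (∑' k, ‖L (K (f k)) -
          L (∑ j ∈ Finset.range r, (inner 𝕜 (φ j) (K (f k)) : 𝕜) • φ j)‖ ^ 2
        = ∑' k, σ (r + k) ^ 2 * ‖L (φ (r + k))‖ ^ 2)
      ∧ (∑' k, ‖L (K (f k)) - P r (L (K (f k)))‖ ^ 2
        = ∑' k, σ (r + k) ^ 2 * ‖L (φ (r + k)) - P r (L (φ (r + k)))‖ ^ 2))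
    ∧ (sX = ⊤ →
        Tendsto (fun r => ∑' k, ‖L (K (f k)) -
            L (∑ j ∈ Finset.range r, (inner 𝕜 (φ j) (K (f k)) : 𝕜) • φ j)‖ ^ 2)
          atTop (nhds 0)
        ∧ ((∃ C, ∀ r, ‖P r‖ ≤ C) →
          Tendsto (fun r => ∑' k, ‖L (K (f k)) - P r (L (K (f k)))‖ ^ 2)
            atTop (nhds 0))) :=
  stmt2_general K σ hσnn f φ hφON hSVD sX hsX L hHS P hPfix
end

section
/- For every r with σ_r > 0, the discrete POD data approximation errors satisfy Σ_{j=1}^s γ_j ‖Lw_j − LΠ_r^X w_j‖²_Y = Σ_{k=r+1}^{s_X} σ_k² ‖Lφ_k‖²_Y and Σ_{j=1}^s γ_j ‖Lw_j − Π_r^Y Lw_j‖²_Y = Σ_{k=r+1}^{s_X} σ_k² ‖Lφ_k − Π_r^Y Lφ_k‖²_Y. -/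
/-!
With `e_j = γ_j⁻¹ b_j` we have `K e_j = w_j`, so both error sums have the form
`Σ_j γ_j ‖T e_j‖²` for the linear maps `T = L (1 - Π_r^X) K` and `T = (1 - Π_r^Y) L K`.
Since `b_j / √γ_j` is an orthonormal basis of `S`, this is the Hilbert–Schmidt sum
`Σ_j ‖T u_j‖²`, which does not depend on the orthonormal basis `u`. Evaluating it on the
right singular vectors `f_k`, where `K f_k = σ_k φ_k`, gives the right-hand sides.
-/

open Finset RCLike

theorem norm_smul_ofReal_sq {𝕜 Y : Type*} [RCLike 𝕜] [NormedAddCommGroup Y] [NormedSpace 𝕜 Y]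
    (a : ℝ) (y : Y) : ‖(a : 𝕜) • y‖ ^ 2 = a ^ 2 * ‖y‖ ^ 2 := by
  rw [norm_smul, norm_ofReal, mul_pow, sq_abs]

section HilbertSchmidt

variable {𝕜 S Y : Type*} [RCLike 𝕜]
  [NormedAddCommGroup S] [InnerProductSpace 𝕜 S] [NormedAddCommGroup Y] [InnerProductSpace 𝕜 Y]

theorem OrthonormalBasis.sum_norm_sq_apply_eq {ι κ : Type*} [Fintype ι] [Fintype κ]
    (u : OrthonormalBasis ι 𝕜 S) (v : OrthonormalBasis κ 𝕜 S) (T : S →ₗ[𝕜] Y) :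
    ∑ i, ‖T (u i)‖ ^ 2 = ∑ k, ‖T (v k)‖ ^ 2 := by
  suffices h : (∑ i, inner 𝕜 (T (u i)) (T (u i)) : 𝕜) = ∑ k, inner 𝕜 (T (v k)) (T (v k)) by
    simp only [inner_self_eq_norm_sq_to_K] at h
    exact_mod_cast h
  calc (∑ i, inner 𝕜 (T (u i)) (T (u i)) : 𝕜)
      = ∑ i, ∑ k, inner 𝕜 (v k) (u i) * inner 𝕜 (T (u i)) (T (v k)) := by
        refine sum_congr rfl fun i _ => ?_
        nth_rw 2 [← v.sum_repr' (u i)]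
        simp only [map_sum, map_smul, inner_sum, inner_smul_right]
    _ = ∑ k, inner 𝕜 (T (∑ i, inner 𝕜 (u i) (v k) • u i)) (T (v k)) := by
        rw [sum_comm]
        simp only [map_sum, map_smul, sum_inner, inner_smul_left, inner_conj_symm]
    _ = ∑ k, inner 𝕜 (T (v k)) (T (v k)) := by simp only [u.sum_repr']

end HilbertSchmidt

section WeightedBasis

variable {𝕜 S Y ι : Type*} [RCLike 𝕜] [DecidableEq ι]
  [NormedAddCommGroup S] [InnerProductSpace 𝕜 S] [NormedAddCommGroup Y] [InnerProductSpace 𝕜 Y]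
  {b : Module.Basis ι 𝕜 S} {γ : ι → ℝ}

theorem inner_basis_basis_of_weighted [Fintype ι]
    (hinner : ∀ u v : S, (inner 𝕜 u v : 𝕜) =
      ∑ j, (γ j : 𝕜) * (starRingEnd 𝕜) (b.repr u j) * (b.repr v j)) (i j : ι) :
    (inner 𝕜 (b i) (b j) : 𝕜) = if i = j then (γ i : 𝕜) else 0 := by
  rw [hinner, sum_eq_single i] <;> simp +contextual [Finsupp.single_apply, eq_comm]

theorem orthonormal_inv_sqrt_smul (hγ : ∀ i, 0 < γ i)
    (hb : ∀ i j, (inner 𝕜 (b i) (b j) : 𝕜) = if i = j then (γ i : 𝕜) else 0) :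
    Orthonormal 𝕜 fun i => ((√(γ i) : ℝ) : 𝕜)⁻¹ • b i := by
  rw [orthonormal_iff_ite]
  intro i j
  rw [inner_smul_left, inner_smul_right, hb]
  split_ifs with hij
  · subst hij
    have hsqrt : ((√(γ i) : ℝ) : 𝕜) ≠ 0 := ofReal_ne_zero.mpr (Real.sqrt_pos.mpr (hγ i)).ne'
    have hγsq : (γ i : 𝕜) = ((√(γ i) : ℝ) : 𝕜) ^ 2 := by
      rw [← ofReal_pow, Real.sq_sqrt (hγ i).le]
    rw [map_inv₀, conj_ofReal, hγsq]
    field_simp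
  · simp

theorem sum_mul_norm_sq_apply_inv_smul_eq [Fintype ι] (hγ : ∀ j, 0 < γ j)
    (hb : ∀ i j, (inner 𝕜 (b i) (b j) : 𝕜) = if i = j then (γ i : 𝕜) else 0)
    {κ : Type*} [Fintype κ] (v : OrthonormalBasis κ 𝕜 S) (T : S →ₗ[𝕜] Y) :
    ∑ j, γ j * ‖T ((γ j : 𝕜)⁻¹ • b j)‖ ^ 2 = ∑ k, ‖T (v k)‖ ^ 2 := by
  have hsqrt : ∀ j, ((√(γ j) : ℝ) : 𝕜) ≠ 0 := fun j =>
    ofReal_ne_zero.mpr (Real.sqrt_pos.mpr (hγ j)).ne'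
  let u := (b.isUnitSMul fun j => (isUnit_iff_ne_zero.mpr (hsqrt j)).inv).toOrthonormalBasis
    (by convert orthonormal_inv_sqrt_smul hγ hb with j
        exact Module.Basis.isUnitSMul_apply _ j)
  rw [← u.sum_norm_sq_apply_eq v T]
  refine sum_congr rfl fun j _ => ?_
  have hsplit : (γ j : 𝕜)⁻¹ • b j = ((√(γ j) : ℝ) : 𝕜)⁻¹ • u j := by
    rw [Module.Basis.coe_toOrthonormalBasis, Module.Basis.isUnitSMul_apply, smul_smul,
      ← mul_inv, ← ofReal_mul, Real.mul_self_sqrt (hγ j).le]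
  rw [hsplit, map_smul, norm_smul, mul_pow, norm_inv, norm_ofReal,
    abs_of_nonneg (Real.sqrt_nonneg _), inv_pow, Real.sq_sqrt (hγ j).le, ← mul_assoc,
    mul_inv_cancel₀ (hγ j).ne', one_mul]

end WeightedBasis

theorem apply_inv_smul_basis_of_weighted {𝕜 S X ι : Type*} [RCLike 𝕜] [Fintype ι]
    [AddCommGroup S] [Module 𝕜 S] [AddCommGroup X] [Module 𝕜 X]
    {b : Module.Basis ι 𝕜 S} {γ : ι → ℝ} (hγ : ∀ j, γ j ≠ 0) {w : ι → X} {K : S →ₗ[𝕜] X}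
    (hK : ∀ g, K g = ∑ j, ((γ j : 𝕜) * b.repr g j) • w j) (j : ι) :
    K ((γ j : 𝕜)⁻¹ • b j) = w j := by
  classical
  rw [hK, sum_eq_single j] <;>
    simp +contextual [ofReal_ne_zero.mpr (hγ j), eq_comm]

theorem apply_eq_smul_of_svd {𝕜 S X ι : Type*} [RCLike 𝕜] [Fintype ι]
    [NormedAddCommGroup S] [InnerProductSpace 𝕜 S] [AddCommGroup X] [Module 𝕜 X]
    {K : S →ₗ[𝕜] X} {f : OrthonormalBasis ι 𝕜 S} {σ : ι → ℝ} {φ : ι → X}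
    (hSVD : ∀ g, K g = ∑ k, ((σ k : 𝕜) * inner 𝕜 (f k) g) • φ k) (k : ι) :
    K (f k) = (σ k : 𝕜) • φ k := by
  classical
  rw [hSVD, sum_eq_single k] <;>
    simp +contextual [orthonormal_iff_ite.mp f.orthonormal]

section Projection

variable (𝕜 : Type*) {X : Type*} [RCLike 𝕜] [NormedAddCommGroup X] [InnerProductSpace 𝕜 X]

def podProjection (φ : ℕ → X) (r : ℕ) : X →ₗ[𝕜] X :=
  ∑ k ∈ range r, (innerₛₗ 𝕜 (φ k)).smulRight (φ k)

variable {𝕜}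

theorem podProjection_apply (φ : ℕ → X) (r : ℕ) (x : X) :
    podProjection 𝕜 φ r x = ∑ k ∈ range r, (inner 𝕜 (φ k) x : 𝕜) • φ k := by
  simp [podProjection]

theorem podProjection_apply_self {φ : ℕ → X} {r k : ℕ}
    (hφ : ∀ i < r, (inner 𝕜 (φ i) (φ k) : 𝕜) = if i = k then 1 else 0) :
    podProjection 𝕜 φ r (φ k) = if k < r then φ k else 0 := by
  rw [podProjection_apply, sum_congr rfl fun i hi => by rw [hφ i (mem_range.mp hi)]]
  simp [ite_smul]

end Projection

theorem stmt7_general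
    {𝕜 : Type*} [RCLike 𝕜]
    {X Y S : Type*}
    [NormedAddCommGroup X] [InnerProductSpace 𝕜 X]
    [NormedAddCommGroup Y] [InnerProductSpace 𝕜 Y]
    [NormedAddCommGroup S] [InnerProductSpace 𝕜 S]
    (s : ℕ)
    (b : Module.Basis (Fin s) 𝕜 S)
    (γ : Fin s → ℝ) (hγ : ∀ j, 0 < γ j)
    (hinner : ∀ u v : S, (inner 𝕜 u v : 𝕜) =
      ∑ j, (γ j : 𝕜) * (starRingEnd 𝕜) (b.repr u j) * (b.repr v j))
    (w : Fin s → X)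
    (K : S →L[𝕜] X)
    (hK : ∀ g : S, K g = ∑ j, ((γ j : 𝕜) * (b.repr g j)) • w j)
    (σ : ℕ → ℝ) (hσnn : ∀ k, 0 ≤ σ k)
    (f : OrthonormalBasis (Fin s) 𝕜 S)
    (φ : ℕ → X)
    (hφON : ∀ j k, 0 < σ j → 0 < σ k →
      (inner 𝕜 (φ j) (φ k) : 𝕜) = if j = k then 1 else 0)
    (hSVD : ∀ g : S, K g = ∑ k : Fin s, ((σ (k : ℕ) : 𝕜) * (inner 𝕜 (f k) g : 𝕜)) • φ (k : ℕ))
    (L : X →ₗ[𝕜] Y)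
    (r : ℕ) (hr : ∀ k < r, 0 < σ k)
    (P : Y →L[𝕜] Y)
    (hPfix : ∀ k < r, P (L (φ k)) = L (φ k)) :
    (∑ j, γ j * ‖L (w j) -
        L (∑ k ∈ Finset.range r, (inner 𝕜 (φ k) (w j) : 𝕜) • φ k)‖ ^ 2
      = ∑ k : Fin s, if r ≤ (k : ℕ) then σ (k : ℕ) ^ 2 * ‖L (φ (k : ℕ))‖ ^ 2 else 0)
    ∧ (∑ j, γ j * ‖L (w j) - P (L (w j))‖ ^ 2
      = ∑ k : Fin s, if r ≤ (k : ℕ) then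
          σ (k : ℕ) ^ 2 * ‖L (φ (k : ℕ)) - P (L (φ (k : ℕ)))‖ ^ 2 else 0) := by
  have hKe := apply_inv_smul_basis_of_weighted (fun j => (hγ j).ne') (K := K.toLinearMap) hK
  have hKf := apply_eq_smul_of_svd (K := K.toLinearMap) hSVD
  have hb := inner_basis_basis_of_weighted hinner
  constructor
  · have h := sum_mul_norm_sq_apply_inv_smul_eq hγ hb f
      (L ∘ₗ (LinearMap.id - podProjection 𝕜 φ r) ∘ₗ K.toLinearMap)
    simp only [LinearMap.comp_apply, LinearMap.sub_apply, LinearMap.id_apply,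
      hKe, hKf, map_sub] at h
    simp only [← podProjection_apply φ r, h]
    refine sum_congr rfl fun k _ => ?_
    rcases (hσnn k).eq_or_lt with hzero | hpos
    · simp [← hzero]
    rw [map_smul (podProjection 𝕜 φ r),
      podProjection_apply_self fun i hi => hφON i k (hr i hi) hpos]
    by_cases hk : r ≤ (k : ℕ)
    · simp [hk, not_lt.mpr hk, norm_smul_ofReal_sq]
    · simp [hk, not_le.mp hk]
  · have h := sum_mul_norm_sq_apply_inv_smul_eq hγ hb f
      (((LinearMap.id - P.toLinearMap) ∘ₗ L) ∘ₗ K.toLinearMap)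
    simp only [LinearMap.comp_apply, LinearMap.sub_apply, LinearMap.id_apply,
      ContinuousLinearMap.coe_coe, hKe, hKf] at h
    rw [h]
    refine sum_congr rfl fun k _ => ?_
    rw [map_smul, map_smul, ← smul_sub, norm_smul_ofReal_sq]
    split_ifs with hk
    · rfl
    · rw [hPfix k (not_le.mp hk), sub_self, norm_zero]; ring

/-- Discrete POD setting: `S = 𝕜^s` with the weighted inner
product `(u,v)_S = Σ_j γ_j u_j conj(v_j)` (realised by a basis `b` of an
abstract Hilbert space `S`; Mathlib's `inner` is conjugate linear in the first
slot), snapshots `w_j ∈ X`, POD operator `K f = Σ_j γ_j f_j w_j` with SVD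
`K g = Σ_k σ_k (g,f_k)_S φ_k` (0-based indexing, `σ` extended by zero beyond
`s`; the paper's "σ_r > 0" is `∀ k < r, 0 < σ k`, and "Σ_{k=r+1}^{s_X}" is the
sum over indices `k` with `r ≤ k`, the terms with `σ_k = 0` vanishing).
`Π_r^X x = Σ_{k<r} (x,φ_k) φ_k` and `P = Π_r^Y` is a bounded projection onto
`Y_r = span{Lφ_k : k < r}`.  Conclusions: the two exact discrete POD data
approximation error formulas. -/
theorem stmt7
    {𝕜 : Type*} [RCLike 𝕜]
    {X Y S : Type*}
    [NormedAddCommGroup X] [InnerProductSpace 𝕜 X] [CompleteSpace X] [SecondCountableTopology X]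
    [NormedAddCommGroup Y] [InnerProductSpace 𝕜 Y] [CompleteSpace Y] [SecondCountableTopology Y]
    [NormedAddCommGroup S] [InnerProductSpace 𝕜 S] [CompleteSpace S]
    (s : ℕ) (hs : 0 < s)
    (b : Module.Basis (Fin s) 𝕜 S)
    (γ : Fin s → ℝ) (hγ : ∀ j, 0 < γ j)
    (hinner : ∀ u v : S, (inner 𝕜 u v : 𝕜) =
      ∑ j, (γ j : 𝕜) * (starRingEnd 𝕜) (b.repr u j) * (b.repr v j))
    (w : Fin s → X)
    (K : S →L[𝕜] X)
    (hK : ∀ g : S, K g = ∑ j, ((γ j : 𝕜) * (b.repr g j)) • w j)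
    (σ : ℕ → ℝ) (hσmono : Antitone σ) (hσnn : ∀ k, 0 ≤ σ k)
    (hσs : ∀ k, s ≤ k → σ k = 0)
    (f : OrthonormalBasis (Fin s) 𝕜 S)
    (φ : ℕ → X)
    (hφON : ∀ j k, 0 < σ j → 0 < σ k →
      (inner 𝕜 (φ j) (φ k) : 𝕜) = if j = k then 1 else 0)
    (hSVD : ∀ g : S, K g = ∑ k : Fin s, ((σ (k : ℕ) : 𝕜) * (inner 𝕜 (f k) g : 𝕜)) • φ (k : ℕ))
    (hKf : ∀ k : Fin s, 0 < σ (k : ℕ) → K (f k) = (σ (k : ℕ) : 𝕜) • φ (k : ℕ))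
    (hKadj : ∀ k : Fin s, 0 < σ (k : ℕ) →
      ContinuousLinearMap.adjoint K (φ (k : ℕ)) = (σ (k : ℕ) : 𝕜) • f k)
    (sX : ℕ) (hsX : ∀ k, 0 < σ k ↔ k < sX)
    (L : X →ₗ[𝕜] Y)
    (r : ℕ) (hr : ∀ k < r, 0 < σ k)
    (P : Y →L[𝕜] Y)
    (hPfix : ∀ k < r, P (L (φ k)) = L (φ k))
    (hPrange : ∀ y : Y, P y ∈ Submodule.span 𝕜 ((fun k => L (φ k)) '' Set.Iio r)) :
    (∑ j, γ j * ‖L (w j) -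
        L (∑ k ∈ Finset.range r, (inner 𝕜 (φ k) (w j) : 𝕜) • φ k)‖ ^ 2
      = ∑ k : Fin s, if r ≤ (k : ℕ) then σ (k : ℕ) ^ 2 * ‖L (φ (k : ℕ))‖ ^ 2 else 0)
    ∧ (∑ j, γ j * ‖L (w j) - P (L (w j))‖ ^ 2
      = ∑ k : Fin s, if r ≤ (k : ℕ) then
          σ (k : ℕ) ^ 2 * ‖L (φ (k : ℕ)) - P (L (φ (k : ℕ)))‖ ^ 2 else 0) :=
  stmt7_general s b γ hγ hinner w K hK σ hσnn f φ hφON hSVD L r hr P hPfix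
end

section
/- Assume additionally that L is injective and the L^{-1} assumption holds: either s_X < ∞, or L^{-1}Π_r^Y LK f = Σ_{j=1}^m ∫_𝒪 f_j(t) (L^{-1}Π_r^Y Lw_j)(t) dt for all f ∈ S. Then for every r with σ_r > 0, Σ_{j=1}^m ‖w_j − L^{-1}Π_r^Y Lw_j‖²_{L²(𝒪;X)} = Σ_{r < k ≤ s_X} σ_k² ‖φ_k − L^{-1}Π_r^Y Lφ_k‖²_X. If s_X = ∞, this error tends to 0 as r → ∞ provided either (i) L^{-1} is bounded and sup_r ‖Π_r^Y‖ < ∞, or (ii) the operators L^{-1}Π_r^Y L are uniformly bounded in operator norm. -/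
/-!
Write `T_r = L⁻¹Π_r^Y`. Since `Π_r^Y` is bounded with finite-dimensional range, on which `L⁻¹` is
linear, `T_r` is bounded and commutes with Bochner integrals; so the error snapshots
`w_j - T_r L w_j` generate the operator `K - T_r L K`. For snapshots `u_j` with operator
`Q g = ∑_j ∫ g_j u_j`, Parseval in a Hilbert basis `(e_i)` of `X` and in `(f_k)` gives the
Hilbert–Schmidt identity `∑_k ‖Q f_k‖² = ∑_i ‖Q* e_i‖² = ∑_j ‖u_j‖²_{L²}`. For `Q = K - T_r L K`
this is `∑_k σ_k² ‖φ_k - T_r L φ_k‖²`, whose terms with `k < r` vanish because `T_r L` fixes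
`φ_k`. Under (i) or (ii) the terms are bounded, uniformly in `r`, by a multiple of
`‖K f_k‖² + ‖L K f_k‖²`, which is summable by the same identity; so the error is dominated by the
tail of a convergent series.
-/

open Filter MeasureTheory

theorem MeasureTheory.Lp.lintegral_enorm_sq {α F : Type*} [MeasurableSpace α] {μ : Measure α}
    [NormedAddCommGroup F] (v : Lp F 2 μ) : ∫⁻ t, ‖v t‖ₑ ^ 2 ∂μ = ‖v‖ₑ ^ 2 := by
  have h := eLpNorm_nnreal_pow_eq_lintegral (f := v) (μ := μ) (p := 2) two_ne_zero
  simp only [NNReal.coe_ofNat, ENNReal.rpow_two, ENNReal.coe_ofNat] at h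
  rw [Lp.enorm_def, h]

theorem MeasureTheory.Lp.norm_sq_eq_integral {α F : Type*} [MeasurableSpace α] {μ : Measure α}
    [NormedAddCommGroup F] (v : Lp F 2 μ) : ‖v‖ ^ 2 = ∫ t, ‖v t‖ ^ 2 ∂μ := by
  have h := integral_toReal (μ := μ) (f := fun t => ‖v t‖ₑ ^ 2)
    ((Lp.aestronglyMeasurable v).enorm.pow_const 2) (.of_forall fun _ => by finiteness)
  simp only [ENNReal.toReal_pow, toReal_enorm, Lp.lintegral_enorm_sq] at h
  exact h.symm

theorem tendsto_tsum_nat_add_of_le {a : ℕ → ℕ → ℝ} {b : ℕ → ℝ} (hb : Summable b)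
    (ha : ∀ r k, 0 ≤ a r k) (hab : ∀ r k, a r k ≤ b k) :
    Tendsto (fun r => ∑' k, a r (k + r)) atTop (nhds 0) := by
  refine tendsto_of_tendsto_of_tendsto_of_le_of_le tendsto_const_nhds (tendsto_sum_nat_add b)
    (fun r => tsum_nonneg fun k => ha r _) fun r => ?_
  have hb' : Summable fun k => b (k + r) := (summable_nat_add_iff r).mpr hb
  exact (hb'.of_nonneg_of_le (fun k => ha r _) fun k => hab r _).tsum_le_tsum
    (fun k => hab r _) hb'

theorem Submodule.exists_mem_eq_of_mem_span_image {R M N ι : Type*} [Semiring R]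
    [AddCommMonoid M] [Module R M] [AddCommMonoid N] [Module R N] (L : M →ₗ[R] N)
    (D : Submodule R M) (φ : ι → M) {s : Set ι} (hφ : ∀ k ∈ s, φ k ∈ D) {y : N}
    (hy : y ∈ span R ((fun k => L (φ k)) '' s)) : ∃ x ∈ D, L x = y := by
  rw [← Set.image_image, span_image] at hy
  obtain ⟨x, hx, rfl⟩ := hy
  exact ⟨x, span_le.mpr (by rintro _ ⟨k, hk, rfl⟩; exact hφ k hk) hx, rfl⟩

section InnerProductSpace

variable {𝕜 E : Type*} [RCLike 𝕜] [NormedAddCommGroup E] [InnerProductSpace 𝕜 E]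

-- Distinct vectors of the family are `√2` apart, so the balls of radius `1/2` are disjoint.
theorem Orthonormal.countable [SecondCountableTopology E] {ι : Type*} {v : ι → E}
    (hv : Orthonormal 𝕜 v) : Countable ι := by
  refine Pairwise.countable_of_isOpen_disjoint (s := fun i => Metric.ball (v i) (1 / 2))
    (fun i j hij => Metric.ball_disjoint_ball ?_) (fun _ => Metric.isOpen_ball)
    (fun i => ⟨v i, Metric.mem_ball_self (by norm_num)⟩)
  have hsq : ‖v i - v j‖ ^ 2 = 2 := by
    rw [@norm_sub_sq 𝕜, hv.2 hij, hv.1 i, hv.1 j]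
    norm_num
  rw [dist_eq_norm]
  nlinarith [norm_nonneg (v i - v j)]

theorem HilbertBasis.tsum_enorm_inner_sq [CompleteSpace E] {ι : Type*} (b : HilbertBasis ι 𝕜 E)
    (x : E) : ∑' i, ‖(inner 𝕜 (b i) x : 𝕜)‖ₑ ^ 2 = ‖x‖ₑ ^ 2 := by
  have h := lp.hasSum_norm (p := 2) (by norm_num) (b.repr x)
  simp only [b.repr_apply_apply, LinearIsometryEquiv.norm_map, ENNReal.toReal_ofNat,
    Real.rpow_two] at h
  have h' : HasSum (fun i => ‖(inner 𝕜 (b i) x : 𝕜)‖₊ ^ 2) (‖x‖₊ ^ 2) := by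
    rw [← NNReal.hasSum_coe]
    push_cast
    exact h
  simp only [enorm_eq_nnnorm]
  exact_mod_cast (ENNReal.hasSum_coe.mpr h').tsum_eq

/-- The Hilbert–Schmidt norm of `Q` can be computed on either side of the adjoint pair `(Q, h)`. -/
theorem HilbertBasis.tsum_enorm_sq_eq_of_inner_eq {F : Type*} [NormedAddCommGroup F]
    [InnerProductSpace 𝕜 F] [CompleteSpace E] [CompleteSpace F] {ι κ : Type*}
    (b : HilbertBasis ι 𝕜 E) (e : HilbertBasis κ 𝕜 F) (Q : E → F) (h : κ → E)
    (hQ : ∀ i x, inner 𝕜 (h i) x = inner 𝕜 (e i) (Q x)) :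
    ∑' k, ‖Q (b k)‖ₑ ^ 2 = ∑' i, ‖h i‖ₑ ^ 2 := calc
  ∑' k, ‖Q (b k)‖ₑ ^ 2 = ∑' k, ∑' i, ‖(inner 𝕜 (e i) (Q (b k)) : 𝕜)‖ₑ ^ 2 := by
    simp only [e.tsum_enorm_inner_sq]
  _ = ∑' i, ∑' k, ‖(inner 𝕜 (b k) (h i) : 𝕜)‖ₑ ^ 2 := by
    rw [ENNReal.tsum_comm]
    simp only [← hQ, ← inner_conj_symm (h _), RCLike.enorm_conj]
  _ = ∑' i, ‖h i‖ₑ ^ 2 := by simp only [b.tsum_enorm_inner_sq]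

theorem HilbertBasis.tsum_mul_inner_smul_self {F ι : Type*} [AddCommGroup F] [Module 𝕜 F]
    [TopologicalSpace F] (b : HilbertBasis ι 𝕜 E) (c : ι → 𝕜) (φ : ι → F) (k : ι) :
    ∑' l, (c l * inner 𝕜 (b l) (b k)) • φ l = c k • φ k := by
  classical
  simp only [orthonormal_iff_ite.mp b.orthonormal, mul_ite, mul_one, mul_zero, ite_smul,
    zero_smul]
  exact tsum_ite_eq k _

end InnerProductSpace

theorem EuclideanSpace.enorm_sq_eq {𝕜 n : Type*} [RCLike 𝕜] [Fintype n]
    (x : EuclideanSpace 𝕜 n) : ‖x‖ₑ ^ 2 = ∑ i, ‖x i‖ₑ ^ 2 := by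
  rw [enorm_eq_nnnorm, EuclideanSpace.nnnorm_eq, ← ENNReal.coe_pow, NNReal.sq_sqrt]
  push_cast
  rfl

theorem LinearMap.exists_clm_apply_eq_comp {𝕜 X Y : Type*} [RCLike 𝕜]
    [NormedAddCommGroup X] [NormedSpace 𝕜 X] [NormedAddCommGroup Y] [NormedSpace 𝕜 Y]
    (A : Y →ₗ[𝕜] X) (P : Y →L[𝕜] Y) {s : Set Y} (hs : s.Finite)
    (hP : ∀ y, P y ∈ Submodule.span 𝕜 s) : ∃ T : Y →L[𝕜] X, ∀ y, T y = A (P y) := by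
  have := FiniteDimensional.span_of_finite 𝕜 hs
  exact ⟨(A ∘ₗ (Submodule.span 𝕜 s).subtype).toContinuousLinearMap ∘L P.codRestrict _ hP,
    fun y => rfl⟩

theorem exists_norm_linv_proj_le {𝕜 X Y : Type*} [RCLike 𝕜] [NormedAddCommGroup X]
    [NormedSpace 𝕜 X] [NormedAddCommGroup Y] [NormedSpace 𝕜 Y] {D : Submodule 𝕜 X} {L : X →ₗ[𝕜] Y} {Linv : Y →ₗ[𝕜] X}
    (hLinv : ∀ x ∈ D, Linv (L x) = x) {P : ℕ → Y →L[𝕜] Y} (hP : ∀ r y, ∃ x ∈ D, L x = P r y)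
    (hbd : ((∃ C, ∀ x ∈ D, ‖x‖ ≤ C * ‖L x‖) ∧ (∃ C, ∀ r, ‖P r‖ ≤ C))
      ∨ (∃ C, ∀ r, ∀ x ∈ D, ‖Linv (P r (L x))‖ ≤ C * ‖x‖)) :
    ∃ C, ∀ r, ∀ x ∈ D, ‖Linv (P r (L x))‖ ≤ C * (‖x‖ + ‖L x‖) := by
  rcases hbd with ⟨⟨C₁, hC₁⟩, C₂, hC₂⟩ | ⟨C, hC⟩
  · have hC₂0 : 0 ≤ C₂ := (norm_nonneg _).trans (hC₂ 0)
    refine ⟨max C₁ 0 * C₂, fun r x _ => ?_⟩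
    obtain ⟨x', hx', hLx'⟩ := hP r (L x)
    calc ‖Linv (P r (L x))‖ = ‖x'‖ := by rw [← hLx', hLinv x' hx']
      _ ≤ max C₁ 0 * ‖P r (L x)‖ := by
          rw [← hLx']
          exact (hC₁ x' hx').trans (by gcongr; exact le_max_left _ _)
      _ ≤ max C₁ 0 * (C₂ * ‖L x‖) := by gcongr; exact (P r).le_of_opNorm_le (hC₂ r) _
      _ ≤ max C₁ 0 * C₂ * (‖x‖ + ‖L x‖) := by
          rw [mul_assoc]
          gcongr
          linarith [norm_nonneg x]
  · refine ⟨max C 0, fun r x hx => (hC r x hx).trans ?_⟩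
    gcongr
    · exact le_max_left _ _
    · linarith [norm_nonneg (L x)]

namespace POD

variable {𝕜 : Type*} [RCLike 𝕜] {α : Type*} [MeasurableSpace α] {μ : Measure α} {m : ℕ}

section Operator

variable {Z Z' : Type*} [NormedAddCommGroup Z] [NormedSpace 𝕜 Z]
  [NormedAddCommGroup Z'] [NormedSpace 𝕜 Z']

theorem integrable_smul (g : Lp (EuclideanSpace 𝕜 (Fin m)) 2 μ) (v : Lp Z 2 μ) (j : Fin m) :
    Integrable (fun t => g t j • v t) μ :=
  memLp_one_iff_integrable.mp ((Lp.memLp v).smul ((Lp.memLp g).eval_piLp j))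

variable [NormedSpace ℝ Z] [NormedSpace ℝ Z']

noncomputable def operator (u : Fin m → Lp Z 2 μ) (g : Lp (EuclideanSpace 𝕜 (Fin m)) 2 μ) : Z :=
  ∑ j, ∫ t, g t j • u j t ∂μ

theorem operator_sub (u v : Fin m → Lp Z 2 μ) (g : Lp (EuclideanSpace 𝕜 (Fin m)) 2 μ) :
    operator (fun j => u j - v j) g = operator u g - operator v g := by
  simp only [operator, ← Finset.sum_sub_distrib]
  refine Finset.sum_congr rfl fun j _ => ?_
  rw [← integral_sub (integrable_smul g _ j) (integrable_smul g _ j)]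
  refine integral_congr_ae ?_
  filter_upwards [Lp.coeFn_sub (u j) (v j)] with t ht
  rw [ht, Pi.sub_apply, smul_sub]

theorem operator_compLp [CompleteSpace Z] [CompleteSpace Z'] (T : Z →L[𝕜] Z')
    (u : Fin m → Lp Z 2 μ) (g : Lp (EuclideanSpace 𝕜 (Fin m)) 2 μ) :
    operator (fun j => T.compLp (u j)) g = T (operator u g) := by
  simp only [operator, map_sum, ← T.integral_comp_comm (integrable_smul g _ _)]
  refine Finset.sum_congr rfl fun j _ => integral_congr_ae ?_
  filter_upwards [T.coeFn_compLp (u j)] with t ht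
  rw [ht, map_smul]

end Operator

section Adjoint

variable {Z : Type*} [NormedAddCommGroup Z] [InnerProductSpace 𝕜 Z]

theorem memLp_inner_const (u : Fin m → Lp Z 2 μ) (z : Z) :
    MemLp (fun t => WithLp.toLp 2 fun j => (inner 𝕜 (u j t) z : 𝕜)) 2 μ :=
  memLp_piLp_iff.mpr fun j => (Lp.memLp (u j)).inner_const z

noncomputable def adjoint (u : Fin m → Lp Z 2 μ) (z : Z) : Lp (EuclideanSpace 𝕜 (Fin m)) 2 μ :=
  (memLp_inner_const u z).toLp

theorem adjoint_ae_eq (u : Fin m → Lp Z 2 μ) (z : Z) :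
    ∀ᵐ t ∂μ, ∀ j, adjoint u z t j = inner 𝕜 (u j t) z := by
  filter_upwards [(memLp_inner_const (𝕜 := 𝕜) u z).coeFn_toLp] with t ht j
  rw [adjoint, ht]

variable [NormedSpace ℝ Z] [CompleteSpace Z]

theorem inner_adjoint (u : Fin m → Lp Z 2 μ) (z : Z) (g : Lp (EuclideanSpace 𝕜 (Fin m)) 2 μ) :
    inner 𝕜 (adjoint u z) g = inner 𝕜 z (operator u g) := by
  have hint : ∀ j, Integrable (fun t => (inner 𝕜 z (g t j • u j t) : 𝕜)) μ :=
    fun j => (integrable_smul g (u j) j).const_inner (𝕜 := 𝕜) z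
  rw [L2.inner_def, operator, inner_sum]
  simp only [← integral_inner (integrable_smul g _ _)]
  rw [← integral_finsetSum _ fun j _ => hint j]
  refine integral_congr_ae ?_
  filter_upwards [adjoint_ae_eq (𝕜 := 𝕜) u z] with t ht
  simp only [PiLp.inner_apply, ht, inner_smul_right, RCLike.inner_apply, inner_conj_symm]

variable [SecondCountableTopology Z]

theorem tsum_enorm_operator_sq {ι : Type*} (u : Fin m → Lp Z 2 μ)
    (b : HilbertBasis ι 𝕜 (Lp (EuclideanSpace 𝕜 (Fin m)) 2 μ)) :
    ∑' k, ‖operator u (b k)‖ₑ ^ 2 = ∑ j, ‖u j‖ₑ ^ 2 := by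
  obtain ⟨W, e, -⟩ := exists_hilbertBasis 𝕜 Z
  have : Countable W := e.orthonormal.countable
  have hmeas : ∀ j i, AEMeasurable (fun t => ‖(inner 𝕜 (u j t) (e i) : 𝕜)‖ₑ ^ 2) μ :=
    fun j i => ((Lp.aestronglyMeasurable (u j)).inner_const (c := e i)).enorm.pow_const 2
  calc ∑' k, ‖operator u (b k)‖ₑ ^ 2 = ∑' i, ‖adjoint u (e i)‖ₑ ^ 2 :=
        b.tsum_enorm_sq_eq_of_inner_eq e _ _ fun i g => inner_adjoint u (e i) g
    _ = ∑' i, ∫⁻ t, ∑ j, ‖(inner 𝕜 (u j t) (e i) : 𝕜)‖ₑ ^ 2 ∂μ := by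
        refine tsum_congr fun i => ?_
        rw [← Lp.lintegral_enorm_sq]
        refine lintegral_congr_ae ?_
        filter_upwards [adjoint_ae_eq (𝕜 := 𝕜) u (e i)] with t ht
        simp only [EuclideanSpace.enorm_sq_eq, ht]
    _ = ∑ j, ∫⁻ t, ∑' i, ‖(inner 𝕜 (e i) (u j t) : 𝕜)‖ₑ ^ 2 ∂μ := by
        simp only [lintegral_finsetSum' _ fun j _ => hmeas j _]
        rw [Summable.tsum_finsetSum fun j _ => ENNReal.summable]
        refine Finset.sum_congr rfl fun j _ => ?_
        rw [← lintegral_tsum (hmeas j)]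
        simp only [← inner_conj_symm (u j _), RCLike.enorm_conj]
    _ = ∑ j, ‖u j‖ₑ ^ 2 := by
        simp only [e.tsum_enorm_inner_sq, Lp.lintegral_enorm_sq]

theorem hasSum_norm_operator_sq {ι : Type*} (u : Fin m → Lp Z 2 μ)
    (b : HilbertBasis ι 𝕜 (Lp (EuclideanSpace 𝕜 (Fin m)) 2 μ)) :
    HasSum (fun k => ‖operator u (b k)‖ ^ 2) (∑ j, ∫ t, ‖u j t‖ ^ 2 ∂μ) := by
  have h : HasSum (fun k => ‖operator u (b k)‖₊ ^ 2) (∑ j, ‖u j‖₊ ^ 2) := by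
    rw [← ENNReal.hasSum_coe]
    push_cast
    simp only [← enorm_eq_nnnorm]
    rw [← tsum_enorm_operator_sq u b]
    exact ENNReal.summable.hasSum
  simpa only [NNReal.coe_sum, NNReal.coe_pow, coe_nnnorm, Lp.norm_sq_eq_integral]
    using NNReal.hasSum_coe.mpr h

end Adjoint

variable {X : Type*} [NormedAddCommGroup X] [InnerProductSpace 𝕜 X] [NormedSpace ℝ X]
  [CompleteSpace X] [SecondCountableTopology X]

section NormedTarget

variable {Y : Type*} [NormedAddCommGroup Y] [NormedSpace 𝕜 Y] [NormedSpace ℝ Y] [CompleteSpace Y]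

theorem hasSum_norm_operator_sub_sq {ι : Type*}
    (b : HilbertBasis ι 𝕜 (Lp (EuclideanSpace 𝕜 (Fin m)) 2 μ)) (w : Fin m → Lp X 2 μ)
    (v : Fin m → Lp Y 2 μ) (T : Y →L[𝕜] X) :
    HasSum (fun k => ‖operator w (b k) - T (operator v (b k))‖ ^ 2)
      (∑ j, ∫ t, ‖w j t - T (v j t)‖ ^ 2 ∂μ) := by
  have h := hasSum_norm_operator_sq (fun j => w j - T.compLp (v j)) b
  simp only [operator_sub w (fun j => T.compLp (v j)), operator_compLp T v] at h
  convert h using 2 with j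
  refine integral_congr_ae ?_
  filter_upwards [Lp.coeFn_sub (w j) (T.compLp (v j)), T.coeFn_compLp (v j)] with t h₁ h₂
  rw [h₁, Pi.sub_apply, h₂]

theorem error_eq_tsum (b : HilbertBasis ℕ 𝕜 (Lp (EuclideanSpace 𝕜 (Fin m)) 2 μ))
    (w : Fin m → Lp X 2 μ) (v : Fin m → Lp Y 2 μ) (T : Y →L[𝕜] X) (r : ℕ)
    (hT : ∀ k < r, T (operator v (b k)) = operator w (b k)) :
    ∑ j, ∫ t, ‖w j t - T (v j t)‖ ^ 2 ∂μ
      = ∑' k, ‖operator w (b (k + r)) - T (operator v (b (k + r)))‖ ^ 2 := by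
  have h := (hasSum_nat_add_iff' r).mpr (hasSum_norm_operator_sub_sq b w v T)
  rw [Finset.sum_eq_zero (s := Finset.range r) fun k hk => by
    rw [hT k (Finset.mem_range.mp hk), sub_self, norm_zero, zero_pow two_ne_zero], sub_zero] at h
  exact h.tsum_eq.symm

end NormedTarget

variable {Y : Type*} [NormedAddCommGroup Y] [InnerProductSpace 𝕜 Y] [NormedSpace ℝ Y]
  [CompleteSpace Y] [SecondCountableTopology Y]

theorem tendsto_error (b : HilbertBasis ℕ 𝕜 (Lp (EuclideanSpace 𝕜 (Fin m)) 2 μ))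
    (w : Fin m → Lp X 2 μ) (v : Fin m → Lp Y 2 μ) (T : ℕ → Y →L[𝕜] X) (C : ℝ)
    (hT : ∀ r, ∀ k < r, T r (operator v (b k)) = operator w (b k))
    (hC : ∀ r k, ‖T r (operator v (b k))‖ ≤ C * (‖operator w (b k)‖ + ‖operator v (b k)‖)) :
    Tendsto (fun r => ∑ j, ∫ t, ‖w j t - T r (v j t)‖ ^ 2 ∂μ) atTop (nhds 0) := by
  simp only [fun r => error_eq_tsum b w v (T r) r (hT r)]
  refine tendsto_tsum_nat_add_of_le
    (a := fun r k => ‖operator w (b k) - T r (operator v (b k))‖ ^ 2)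
    (((hasSum_norm_operator_sq w b).summable.add
      (hasSum_norm_operator_sq v b).summable).mul_left (2 * (1 + C) ^ 2))
    (fun r k => sq_nonneg _) fun r k => ?_
  set A := operator w (b k)
  set B := operator v (b k)
  have h : ‖A - T r B‖ ≤ (1 + C) * (‖A‖ + ‖B‖) := by
    linarith [norm_sub_le A (T r B), hC r k, norm_nonneg B]
  calc ‖A - T r B‖ ^ 2 ≤ (1 + C) ^ 2 * (‖A‖ + ‖B‖) ^ 2 := by
        rw [← mul_pow]
        exact pow_le_pow_left₀ (norm_nonneg _) h 2
    _ ≤ 2 * (1 + C) ^ 2 * (‖A‖ ^ 2 + ‖B‖ ^ 2) := by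
        nlinarith [add_sq_le (a := ‖A‖) (b := ‖B‖), sq_nonneg (1 + C)]
end POD

/-- `Linv` is a linear left inverse of `L` on `D = D(L)`, so `Linv (P r ·)` represents `L⁻¹Π_r^Y`.
Indices start at `0`: `Y_r` is spanned by the `L (φ k)` with `k < r`, and the sum over
`r < k ≤ s_X` of the paper is the sum over `k` of the terms at `r + k` (which vanish from `s_X` on). -/
theorem stmt10_general
    {𝕜 : Type*} [RCLike 𝕜]
    {X Y : Type*}
    [NormedAddCommGroup X] [InnerProductSpace 𝕜 X] [NormedSpace ℝ X]
    [CompleteSpace X] [SecondCountableTopology X]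
    [NormedAddCommGroup Y] [InnerProductSpace 𝕜 Y] [NormedSpace ℝ Y]
    [CompleteSpace Y] [SecondCountableTopology Y]
    (d m : ℕ)
    (O : Set (Fin d → ℝ))
    (w : Fin m → Lp X 2 (volume.restrict O))
    (K : Lp (EuclideanSpace 𝕜 (Fin m)) 2 (volume.restrict O) →L[𝕜] X)
    (hK : ∀ f : Lp (EuclideanSpace 𝕜 (Fin m)) 2 (volume.restrict O),
      K f = ∑ j, ∫ t, (f t j) • (w j t) ∂(volume.restrict O))
    (σ : ℕ → ℝ) (hσnn : ∀ k, 0 ≤ σ k)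
    (f : HilbertBasis ℕ 𝕜 (Lp (EuclideanSpace 𝕜 (Fin m)) 2 (volume.restrict O)))
    (φ : ℕ → X)
    (hSVD : ∀ g : Lp (EuclideanSpace 𝕜 (Fin m)) 2 (volume.restrict O),
      K g = ∑' k, ((σ k : 𝕜) * (inner 𝕜 (f k) g : 𝕜)) • φ k)
    (sX : ℕ∞) (hsX : ∀ k, 0 < σ k ↔ (k : ℕ∞) < sX)
    (D : Submodule 𝕜 X) (L : X →ₗ[𝕜] Y)
    (hKD : ∀ g, K g ∈ D)
    (hφD : ∀ k, 0 < σ k → φ k ∈ D)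
    (Lw : Fin m → Lp Y 2 (volume.restrict O))
    (hLK : ∀ g : Lp (EuclideanSpace 𝕜 (Fin m)) 2 (volume.restrict O),
      L (K g) = ∑ j, ∫ t, (g t j) • (Lw j t) ∂(volume.restrict O))
    (Linv : Y →ₗ[𝕜] X) (hLinv : ∀ x ∈ D, Linv (L x) = x)
    (P : ℕ → Y →L[𝕜] Y)
    (hPfix : ∀ r, (∀ k < r, 0 < σ k) → ∀ k < r, P r (L (φ k)) = L (φ k))
    (hPrange : ∀ r, (∀ k < r, 0 < σ k) → ∀ y : Y,
      P r y ∈ Submodule.span 𝕜 ((fun k => L (φ k)) '' Set.Iio r)) :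
    (∀ r, (∀ k < r, 0 < σ k) →
      ∑ j, ∫ t, ‖w j t - Linv (P r (Lw j t))‖ ^ 2 ∂(volume.restrict O)
        = ∑' k, σ (r + k) ^ 2 * ‖φ (r + k) - Linv (P r (L (φ (r + k))))‖ ^ 2)
    ∧ (sX = ⊤ →
        ((∃ C, ∀ x ∈ D, ‖x‖ ≤ C * ‖L x‖) ∧ (∃ C, ∀ r, ‖P r‖ ≤ C)
          ∨ (∃ C, ∀ r, ∀ x ∈ D, ‖Linv (P r (L x))‖ ≤ C * ‖x‖)) →
        Tendsto (fun r => ∑ j, ∫ t, ‖w j t - Linv (P r (Lw j t))‖ ^ 2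
          ∂(volume.restrict O)) atTop (nhds 0)) := by
  have hK' : ∀ g, K g = POD.operator w g := hK
  have hLK' : ∀ g, L (K g) = POD.operator Lw g := hLK
  have hKf : ∀ k, K (f k) = (σ k : 𝕜) • φ k := fun k => by
    rw [hSVD, f.tsum_mul_inner_smul_self (fun l => (σ l : 𝕜)) φ k]
  have hT : ∀ r, ∃ T : Y →L[𝕜] X, (∀ k < r, 0 < σ k) → ∀ y, T y = Linv (P r y) := fun r => by
    by_cases hr : ∀ k < r, 0 < σ k
    · obtain ⟨T, hT⟩ :=
        Linv.exists_clm_apply_eq_comp (P r) ((Set.finite_Iio r).image _) (hPrange r hr)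
      exact ⟨T, fun _ => hT⟩
    · exact ⟨0, fun h => absurd h hr⟩
  choose T hT using hT
  have herr : ∀ r, (∀ k < r, 0 < σ k) →
      ∑ j, ∫ t, ‖w j t - Linv (P r (Lw j t))‖ ^ 2 ∂(volume.restrict O)
        = ∑ j, ∫ t, ‖w j t - T r (Lw j t)‖ ^ 2 ∂(volume.restrict O) := fun r hr => by
    simp only [hT r hr]
  have hfix : ∀ r, (∀ k < r, 0 < σ k) → ∀ k < r,
      T r (POD.operator Lw (f k)) = POD.operator w (f k) := fun r hr k hk => by
    rw [← hLK', ← hK', hT r hr, hKf, map_smul, map_smul, hPfix r hr k hk, map_smul,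
      hLinv _ (hφD k (hr k hk))]
  refine ⟨fun r hr => ?_, fun htop hbd => ?_⟩
  · rw [herr r hr, POD.error_eq_tsum f w Lw (T r) r (hfix r hr)]
    refine tsum_congr fun k => ?_
    rw [← hK', ← hLK', hKf, map_smul, map_smul, ← smul_sub, hT r hr, norm_smul, mul_pow,
      RCLike.norm_ofReal, abs_of_nonneg (hσnn _), add_comm]
  · have hσ : ∀ k, 0 < σ k := fun k => (hsX k).mpr (htop ▸ ENat.natCast_lt_top k)
    have hpos : ∀ r, ∀ k < r, 0 < σ k := fun _ k _ => hσ k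
    obtain ⟨C, hC⟩ := exists_norm_linv_proj_le hLinv (fun r y =>
      Submodule.exists_mem_eq_of_mem_span_image L D φ (fun k _ => hφD k (hσ k))
        (hPrange r (hpos r) y)) hbd
    refine (POD.tendsto_error f w Lw T C (fun r => hfix r (hpos r)) fun r k => ?_).congr
      fun r => (herr r (hpos r)).symm
    rw [← hK', ← hLK', hT r (hpos r)]
    exact hC r _ (hKD _)

/-- Continuous POD setting as in Statement 9, with `L`
injective on its domain `D = D(L)` (encoded by a linear left inverse `Linv`
of `L` on `D`, representing `L⁻¹ : range L → X`; `Π_r^Y` maps into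
`Y_r = span{Lφ_k : k < r} ⊆ L(D)`, so `Linv (P r ·)` represents `L⁻¹Π_r^Y`),
and the `L⁻¹` assumption: either `s_X < ∞`, or
`L⁻¹Π_r^Y L K f = Σ_j ∫ f_j(t) (L⁻¹Π_r^Y L w_j)(t) dt` for all `f ∈ S`.
Conclusion: the exact error formula
`Σ_j ‖w_j − L⁻¹Π_r^Y L w_j‖²_{L²(𝒪;X)} = Σ_{r<k≤s_X} σ_k² ‖φ_k − L⁻¹Π_r^Y Lφ_k‖²`,
and for `s_X = ∞` its convergence to `0` provided either (i) `L⁻¹` is bounded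
and `sup_r ‖Π_r^Y‖ < ∞`, or (ii) the operators `L⁻¹Π_r^Y L` are uniformly
bounded. -/
theorem stmt10
    {𝕜 : Type*} [RCLike 𝕜]
    {X Y : Type*}
    [NormedAddCommGroup X] [InnerProductSpace 𝕜 X] [NormedSpace ℝ X] [IsScalarTower ℝ 𝕜 X]
    [CompleteSpace X] [SecondCountableTopology X]
    [NormedAddCommGroup Y] [InnerProductSpace 𝕜 Y] [NormedSpace ℝ Y] [IsScalarTower ℝ 𝕜 Y]
    [CompleteSpace Y] [SecondCountableTopology Y]
    (d m : ℕ) (hm : 0 < m)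
    (O : Set (Fin d → ℝ)) (hO : IsOpen O)
    (w : Fin m → Lp X 2 (volume.restrict O))
    (K : Lp (EuclideanSpace 𝕜 (Fin m)) 2 (volume.restrict O) →L[𝕜] X)
    (hK : ∀ f : Lp (EuclideanSpace 𝕜 (Fin m)) 2 (volume.restrict O),
      K f = ∑ j, ∫ t, (f t j) • (w j t) ∂(volume.restrict O))
    (hKcpt : IsCompactOperator K)
    (σ : ℕ → ℝ) (hσmono : Antitone σ) (hσnn : ∀ k, 0 ≤ σ k)
    (f : HilbertBasis ℕ 𝕜 (Lp (EuclideanSpace 𝕜 (Fin m)) 2 (volume.restrict O)))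
    (φ : ℕ → X)
    (hφON : ∀ j k, 0 < σ j → 0 < σ k →
      (inner 𝕜 (φ j) (φ k) : 𝕜) = if j = k then 1 else 0)
    (hSVD : ∀ g : Lp (EuclideanSpace 𝕜 (Fin m)) 2 (volume.restrict O),
      K g = ∑' k, ((σ k : 𝕜) * (inner 𝕜 (f k) g : 𝕜)) • φ k)
    (hKf : ∀ k, 0 < σ k → K (f k) = (σ k : 𝕜) • φ k)
    (sX : ℕ∞) (hsX : ∀ k, 0 < σ k ↔ (k : ℕ∞) < sX)
    (D : Submodule 𝕜 X) (L : X →ₗ[𝕜] Y)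
    (hwD : ∀ j, ∀ᵐ t ∂(volume.restrict O), w j t ∈ D)
    (hKD : ∀ g, K g ∈ D)
    (hφD : ∀ k, 0 < σ k → φ k ∈ D)
    (Lw : Fin m → Lp Y 2 (volume.restrict O))
    (hLw : ∀ j, ∀ᵐ t ∂(volume.restrict O), Lw j t = L (w j t))
    (hLK : ∀ g : Lp (EuclideanSpace 𝕜 (Fin m)) 2 (volume.restrict O),
      L (K g) = ∑ j, ∫ t, (g t j) • (Lw j t) ∂(volume.restrict O))
    (Linv : Y →ₗ[𝕜] X) (hLinv : ∀ x ∈ D, Linv (L x) = x)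
    (P : ℕ → Y →L[𝕜] Y)
    (hPfix : ∀ r, (∀ k < r, 0 < σ k) → ∀ k < r, P r (L (φ k)) = L (φ k))
    (hPrange : ∀ r, (∀ k < r, 0 < σ k) → ∀ y : Y,
      P r y ∈ Submodule.span 𝕜 ((fun k => L (φ k)) '' Set.Iio r))
    (hLinvAssumption : sX ≠ ⊤ ∨
      ∀ r, (∀ k < r, 0 < σ k) →
        ∀ g : Lp (EuclideanSpace 𝕜 (Fin m)) 2 (volume.restrict O),
          Linv (P r (L (K g)))
            = ∑ j, ∫ t, (g t j) • Linv (P r (Lw j t)) ∂(volume.restrict O)) :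
    (∀ r, (∀ k < r, 0 < σ k) →
      ∑ j, ∫ t, ‖w j t - Linv (P r (Lw j t))‖ ^ 2 ∂(volume.restrict O)
        = ∑' k, σ (r + k) ^ 2 * ‖φ (r + k) - Linv (P r (L (φ (r + k))))‖ ^ 2)
    ∧ (sX = ⊤ →
        ((∃ C, ∀ x ∈ D, ‖x‖ ≤ C * ‖L x‖) ∧ (∃ C, ∀ r, ‖P r‖ ≤ C)
          ∨ (∃ C, ∀ r, ∀ x ∈ D, ‖Linv (P r (L x))‖ ≤ C * ‖x‖)) →
        Tendsto (fun r => ∑ j, ∫ t, ‖w j t - Linv (P r (Lw j t))‖ ^ 2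
          ∂(volume.restrict O)) atTop (nhds 0)) :=
  stmt10_general d m O w K hK σ hσnn f φ hSVD sX hsX D L hKD hφD Lw hLK Linv hLinv P hPfix hPrange
end

section
/- Let r be a positive integer. For every choice of coefficients a_1,…,a_r ∈ 𝕂, vectors s_1,…,s_r ∈ S, and elements η_1,…,η_r ∈ X, the rank-at-most-r approximation z_j = Σ_{k=1}^r a_k (s_k)_j η_k (j = 1,…,s) satisfies Σ_{j=1}^s γ_j ‖w_j − z_j‖²_X ≥ Σ_{k > r} σ_k². Moreover, equality is attained by the POD approximation w_j^r = Σ_{k=1}^r (w_j, φ_k)_X φ_k = Σ_{k=1}^r σ_k conj(f_{k,j}) φ_k, i.e. Σ_{j=1}^s γ_j ‖w_j − w_j^r‖²_X = Σ_{k > r} σ_k². -/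
/-!
Put `u k = σ k • φ k`. Evaluating `K` on the basis vectors gives `w j = ∑ k, conj (f k j) • u k`,
and the orthonormality of the `f k` for the weighted inner product makes
`(x k)ₖ ↦ (∑ k, conj (f k j) • x k)ⱼ` an isometry into the `γ`-weighted `ℓ²(X)`. Hence truncating
the sum at `r` leaves an error of exactly `∑_{k ≥ r} σ k ^ 2`. A competitor `z` takes values in a
subspace `V` of dimension at most `r`, and projecting onto `V` gives
`∑ γ j ‖w j - z j‖² ≥ ∑ σ k ^ 2 - ∑ ‖P_V u k‖² = ∑ σ k ^ 2 - ∑ σ k ^ 2 d k`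
with `d k = ‖P_V φ k‖² ∈ [0, 1]` and, by Bessel's inequality, `∑ d k ≤ dim V ≤ r`. For antitone
`σ` such weights give at most `∑_{k < r} σ k ^ 2`.
-/

open Finset

section

variable {𝕜 X : Type*} [RCLike 𝕜] [NormedAddCommGroup X] [InnerProductSpace 𝕜 X]

theorem sum_mul_norm_sq_sum_conj_smul {ι κ : Type*} [Fintype ι] [Fintype κ] [DecidableEq κ]
    (γ : ι → ℝ) (F : κ → ι → 𝕜)
    (hF : ∀ k l, ∑ j, (γ j : 𝕜) * (starRingEnd 𝕜) (F k j) * F l j = if k = l then 1 else 0)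
    (x : κ → X) :
    ∑ j, γ j * ‖∑ k, (starRingEnd 𝕜) (F k j) • x k‖ ^ 2 = ∑ k, ‖x k‖ ^ 2 := by
  suffices h : ((∑ j, γ j * ‖∑ k, (starRingEnd 𝕜) (F k j) • x k‖ ^ 2 : ℝ) : 𝕜)
      = ((∑ k, ‖x k‖ ^ 2 : ℝ) : 𝕜) from mod_cast h
  calc ((∑ j, γ j * ‖∑ k, (starRingEnd 𝕜) (F k j) • x k‖ ^ 2 : ℝ) : 𝕜)
      = ∑ j, ∑ k, ∑ l, (γ j : 𝕜) * (starRingEnd 𝕜) (F k j) * F l j * inner 𝕜 (x l) (x k) := by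
        push_cast
        refine sum_congr rfl fun j _ => ?_
        simp only [← inner_self_eq_norm_sq_to_K, sum_inner, inner_sum, inner_smul_left,
          inner_smul_right, RCLike.conj_conj, mul_sum]
        exact sum_congr rfl fun k _ => sum_congr rfl fun l _ => by ring
    _ = ∑ k, ∑ l, (∑ j, (γ j : 𝕜) * (starRingEnd 𝕜) (F k j) * F l j) * inner 𝕜 (x l) (x k) := by
        rw [sum_comm]
        simp only [sum_mul]
        exact sum_congr rfl fun k _ => sum_comm
    _ = ((∑ k, ‖x k‖ ^ 2 : ℝ) : 𝕜) := by
        simp [hF, inner_self_eq_norm_sq_to_K]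

theorem norm_sq_sub_norm_sq_starProjection_le (K : Submodule 𝕜 X) [K.HasOrthogonalProjection]
    (x : X) {z : X} (hz : z ∈ K) :
    ‖x‖ ^ 2 - ‖K.starProjection x‖ ^ 2 ≤ ‖x - z‖ ^ 2 := by
  have pythagoras : ∀ y ∈ K,
      ‖x - K.starProjection x + y‖ ^ 2 = ‖x - K.starProjection x‖ ^ 2 + ‖y‖ ^ 2 := fun y hy => by
    simpa only [sq] using norm_add_sq_eq_norm_sq_add_norm_sq_of_inner_eq_zero _ _
      (K.starProjection_inner_eq_zero x y hy)
  have hx := pythagoras _ (K.starProjection_apply_mem x)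
  have hxz := pythagoras _ (K.sub_mem (K.starProjection_apply_mem x) hz)
  simp only [sub_add_sub_cancel, sub_add_cancel] at hx hxz
  nlinarith [sq_nonneg ‖K.starProjection x - z‖]

theorem sum_norm_sq_starProjection_le_finrank {ι : Type*} [Fintype ι] {v : ι → X}
    (hv : Orthonormal 𝕜 v) (K : Submodule 𝕜 X) [FiniteDimensional 𝕜 K] :
    ∑ i, ‖K.starProjection (v i)‖ ^ 2 ≤ Module.finrank 𝕜 K := by
  let ψ := stdOrthonormalBasis 𝕜 K
  calc ∑ i, ‖K.starProjection (v i)‖ ^ 2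
      = ∑ i, ∑ n, ‖inner 𝕜 (v i) (ψ n : X)‖ ^ 2 := by
        refine sum_congr rfl fun i _ => ?_
        rw [K.starProjection_apply, Submodule.norm_coe, ← ψ.sum_sq_norm_inner_right]
        simp [norm_inner_symm]
    _ = ∑ n, ∑ i, ‖inner 𝕜 (v i) (ψ n : X)‖ ^ 2 := sum_comm
    _ ≤ ∑ n, ‖(ψ n : X)‖ ^ 2 := sum_le_sum fun n _ => hv.sum_inner_products_le _
    _ = Module.finrank 𝕜 K := by simp [Submodule.norm_coe, ψ.orthonormal.1]

theorem sum_mul_le_sum_lt_of_antitone {n r : ℕ} {μ : ℕ → ℝ} (hμ : Antitone μ)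
    (hμr : 0 ≤ μ r) {d : Fin n → ℝ} (hd0 : ∀ k, 0 ≤ d k) (hd1 : ∀ k, d k ≤ 1)
    (hdr : ∑ k, d k ≤ r) :
    ∑ k : Fin n, μ k * d k ≤ ∑ k : Fin n, if (k : ℕ) < r then μ k else 0 := by
  have hsum_le_min : ∑ k, d k ≤ (min n r : ℕ) := by
    rw [Nat.cast_min]
    refine le_min ?_ hdr
    simpa using sum_le_sum fun k (_ : k ∈ univ) => hd1 k
  have termwise : ∀ k : Fin n, μ k * d k
      ≤ (if (k : ℕ) < r then μ k else 0) - (if (k : ℕ) < r then μ r else 0) + μ r * d k := by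
    intro k
    split_ifs with hk
    · nlinarith [hμ hk.le, hd1 k]
    · nlinarith [hμ (not_lt.mp hk), hd0 k]
  calc ∑ k : Fin n, μ k * d k
      ≤ ∑ k : Fin n, ((if (k : ℕ) < r then μ k else 0) - (if (k : ℕ) < r then μ r else 0)
          + μ r * d k) := sum_le_sum fun k _ => termwise k
    _ = (∑ k : Fin n, if (k : ℕ) < r then μ k else 0) - μ r * min n r + μ r * ∑ k, d k := by
        rw [sum_add_distrib, sum_sub_distrib, ← mul_sum,
          ← sum_filter (p := fun k : Fin n => (k : ℕ) < r) (f := fun _ => μ r), sum_const,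
          Fin.card_filter_val_lt, nsmul_eq_mul, mul_comm]
    _ ≤ ∑ k : Fin n, if (k : ℕ) < r then μ k else 0 := by nlinarith

theorem eq_sum_conj_repr_smul_of_sum_smul_eq {S : Type*} [NormedAddCommGroup S]
    [InnerProductSpace 𝕜 S] {ι κ : Type*} [Fintype ι] [Fintype κ]
    (b : Module.Basis ι 𝕜 S) (γ : ι → ℝ) (hγ : ∀ j, γ j ≠ 0)
    (hinner : ∀ u v : S, (inner 𝕜 u v : 𝕜) =
      ∑ j, (γ j : 𝕜) * (starRingEnd 𝕜) (b.repr u j) * (b.repr v j))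
    (w : ι → X) (f : κ → S) (u : κ → X)
    (h : ∀ g : S, ∑ j, ((γ j : 𝕜) * b.repr g j) • w j = ∑ k, (inner 𝕜 (f k) g : 𝕜) • u k)
    (j : ι) : w j = ∑ k, (starRingEnd 𝕜) (b.repr (f k) j) • u k := by
  classical
  have hj := h (b j)
  simp only [b.repr_self, Finsupp.single_apply, mul_ite, mul_one, mul_zero, ite_smul, zero_smul,
    sum_ite_eq, mem_univ, if_true, hinner, mul_smul, ← smul_sum] at hj
  exact smul_right_injective X (by exact_mod_cast hγ j) hj

theorem sum_norm_sq_starProjection_ofReal_smul_le {s r : ℕ} {σ : ℕ → ℝ} (hσ : Antitone σ)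
    (hσ0 : ∀ k, 0 ≤ σ k) {φ : ℕ → X}
    (hφ : Orthonormal 𝕜 fun k : {k : Fin s // 0 < σ k} => φ k)
    (V : Submodule 𝕜 X) [FiniteDimensional 𝕜 V] (hV : Module.finrank 𝕜 V ≤ r) :
    ∑ k : Fin s, ‖V.starProjection ((σ k : 𝕜) • φ k)‖ ^ 2
      ≤ ∑ k : Fin s, if (k : ℕ) < r then σ k ^ 2 else 0 := by
  set d : Fin s → ℝ := fun k => if 0 < σ k then ‖V.starProjection (φ k)‖ ^ 2 else 0
  have hd : ∀ k : Fin s, ‖V.starProjection ((σ k : 𝕜) • φ k)‖ ^ 2 = σ k ^ 2 * d k := by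
    intro k
    rcases (hσ0 k).eq_or_lt with hk | hk
    · simp [d, ← hk]
    · simp [d, hk, norm_smul, mul_pow, abs_of_pos hk]
  have hd1 : ∀ k, d k ≤ 1 := by
    intro k
    by_cases hk : 0 < σ k
    · simpa [d, hk, hφ.1 ⟨k, hk⟩] using V.norm_starProjection_apply_le (φ k)
    · simp [d, hk]
  have hdr : ∑ k, d k ≤ r := calc
    ∑ k, d k = ∑ k : {k : Fin s // 0 < σ k}, ‖V.starProjection (φ k)‖ ^ 2 := by
      rw [← sum_filter]
      exact sum_subtype _ (by simp) _
    _ ≤ Module.finrank 𝕜 V := sum_norm_sq_starProjection_le_finrank hφ V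
    _ ≤ r := by exact_mod_cast hV
  simp only [hd]
  exact sum_mul_le_sum_lt_of_antitone (fun _ _ h => pow_le_pow_left₀ (hσ0 _) (hσ h) 2)
    (sq_nonneg _) (fun k => by positivity) hd1 hdr

section POD

variable {ι : Type*} [Fintype ι] {γ : ι → ℝ} {w : ι → X} {s : ℕ} {F : Fin s → ι → 𝕜}
  {σ : ℕ → ℝ} {φ : ℕ → X}

theorem norm_sq_ofReal_smul_eq_sq (hσ0 : ∀ k, 0 ≤ σ k)
    (hφ : Orthonormal 𝕜 fun k : {k : Fin s // 0 < σ k} => φ k) (k : Fin s) :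
    ‖(σ k : 𝕜) • φ k‖ ^ 2 = σ k ^ 2 := by
  rcases (hσ0 k).eq_or_lt with hk | hk
  · simp [← hk]
  · simp [norm_smul, abs_of_pos hk, hφ.1 ⟨k, hk⟩]

theorem sum_mul_norm_sq_sub_truncation_eq
    (hF : ∀ k l, ∑ j, (γ j : 𝕜) * (starRingEnd 𝕜) (F k j) * F l j = if k = l then 1 else 0)
    (hσ0 : ∀ k, 0 ≤ σ k) (hφ : Orthonormal 𝕜 fun k : {k : Fin s // 0 < σ k} => φ k)
    (hw : ∀ j, w j = ∑ k, (starRingEnd 𝕜) (F k j) • ((σ k : 𝕜) • φ k)) (r : ℕ) :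
    ∑ j, γ j * ‖w j - ∑ k : Fin s, (if (k : ℕ) < r then
        ((σ k : 𝕜) * (starRingEnd 𝕜) (F k j)) • φ k else 0)‖ ^ 2
      = ∑ k : Fin s, if r ≤ (k : ℕ) then σ k ^ 2 else 0 := by
  have hres : ∀ j, w j - ∑ k : Fin s, (if (k : ℕ) < r then
        ((σ k : 𝕜) * (starRingEnd 𝕜) (F k j)) • φ k else 0)
      = ∑ k, (starRingEnd 𝕜) (F k j) • if r ≤ (k : ℕ) then (σ k : 𝕜) • φ k else 0 := by
    intro j
    rw [hw, ← sum_sub_distrib]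
    refine sum_congr rfl fun k _ => ?_
    split_ifs <;> first | omega | simp [smul_smul, mul_comm]
  simp only [hres]
  rw [sum_mul_norm_sq_sum_conj_smul γ F hF]
  simp [apply_ite, norm_sq_ofReal_smul_eq_sq hσ0 hφ]

theorem sum_le_sum_mul_norm_sq_sub_of_mem
    (hF : ∀ k l, ∑ j, (γ j : 𝕜) * (starRingEnd 𝕜) (F k j) * F l j = if k = l then 1 else 0)
    (hγ : ∀ j, 0 ≤ γ j) (hσ : Antitone σ) (hσ0 : ∀ k, 0 ≤ σ k)
    (hφ : Orthonormal 𝕜 fun k : {k : Fin s // 0 < σ k} => φ k)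
    (hw : ∀ j, w j = ∑ k, (starRingEnd 𝕜) (F k j) • ((σ k : 𝕜) • φ k))
    {r : ℕ} (V : Submodule 𝕜 X) [FiniteDimensional 𝕜 V] (hV : Module.finrank 𝕜 V ≤ r)
    {z : ι → X} (hz : ∀ j, z j ∈ V) :
    (∑ k : Fin s, if r ≤ (k : ℕ) then σ k ^ 2 else 0) ≤ ∑ j, γ j * ‖w j - z j‖ ^ 2 := by
  have htail : (∑ k : Fin s, if r ≤ (k : ℕ) then σ k ^ 2 else 0)
      = ∑ k : Fin s, σ k ^ 2 - ∑ k : Fin s, if (k : ℕ) < r then σ k ^ 2 else 0 := by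
    rw [eq_sub_iff_add_eq, ← sum_add_distrib]
    exact sum_congr rfl fun k _ => by split_ifs <;> first | omega | ring
  have hnorm : ∑ j, γ j * ‖w j‖ ^ 2 = ∑ k : Fin s, σ k ^ 2 := by
    simp only [hw, sum_mul_norm_sq_sum_conj_smul γ F hF, norm_sq_ofReal_smul_eq_sq hσ0 hφ]
  have hnormV : ∑ j, γ j * ‖V.starProjection (w j)‖ ^ 2
      = ∑ k : Fin s, ‖V.starProjection ((σ k : 𝕜) • φ k)‖ ^ 2 := by
    simp only [hw, map_sum, map_smul, sum_mul_norm_sq_sum_conj_smul γ F hF]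
  calc (∑ k : Fin s, if r ≤ (k : ℕ) then σ k ^ 2 else 0)
      ≤ ∑ j, γ j * ‖w j‖ ^ 2 - ∑ j, γ j * ‖V.starProjection (w j)‖ ^ 2 := by
        rw [htail, hnorm, hnormV]
        exact sub_le_sub_left (sum_norm_sq_starProjection_ofReal_smul_le hσ hσ0 hφ V hV) _
    _ ≤ ∑ j, γ j * ‖w j - z j‖ ^ 2 := by
        rw [← sum_sub_distrib]
        refine sum_le_sum fun j _ => ?_
        rw [← mul_sub]
        exact mul_le_mul_of_nonneg_left
          (norm_sq_sub_norm_sq_starProjection_le V (w j) (hz j)) (hγ j)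

end POD

end

theorem stmt19_general
    {𝕜 : Type*} [RCLike 𝕜]
    {X S : Type*}
    [NormedAddCommGroup X] [InnerProductSpace 𝕜 X]
    [NormedAddCommGroup S] [InnerProductSpace 𝕜 S]
    (s : ℕ)
    (b : Module.Basis (Fin s) 𝕜 S)
    (γ : Fin s → ℝ) (hγ : ∀ j, 0 < γ j)
    (hinner : ∀ u v : S, (inner 𝕜 u v : 𝕜) =
      ∑ j, (γ j : 𝕜) * (starRingEnd 𝕜) (b.repr u j) * (b.repr v j))
    (w : Fin s → X)
    (K : S →L[𝕜] X)
    (hK : ∀ g : S, K g = ∑ j, ((γ j : 𝕜) * (b.repr g j)) • w j)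
    (σ : ℕ → ℝ) (hσmono : Antitone σ) (hσnn : ∀ k, 0 ≤ σ k)
    (f : OrthonormalBasis (Fin s) 𝕜 S)
    (φ : ℕ → X)
    (hφON : ∀ j k, 0 < σ j → 0 < σ k →
      (inner 𝕜 (φ j) (φ k) : 𝕜) = if j = k then 1 else 0)
    (hSVD : ∀ g : S, K g = ∑ k : Fin s, ((σ (k : ℕ) : 𝕜) * (inner 𝕜 (f k) g : 𝕜)) • φ (k : ℕ))
    (r : ℕ) :
    (∀ (a : Fin r → 𝕜) (sv : Fin r → S) (η : Fin r → X),
      (∑ k : Fin s, if r ≤ (k : ℕ) then σ (k : ℕ) ^ 2 else 0)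
        ≤ ∑ j, γ j * ‖w j - ∑ k : Fin r, (a k * b.repr (sv k) j) • η k‖ ^ 2)
    ∧ (∑ j, γ j * ‖w j -
          ∑ k : Fin s, (if (k : ℕ) < r then
            ((σ (k : ℕ) : 𝕜) * (starRingEnd 𝕜) (b.repr (f k) j)) • φ (k : ℕ) else 0)‖ ^ 2
        = ∑ k : Fin s, if r ≤ (k : ℕ) then σ (k : ℕ) ^ 2 else 0) := by
  have hF : ∀ k l, ∑ j, (γ j : 𝕜) * (starRingEnd 𝕜) (b.repr (f k) j) * b.repr (f l) j
      = if k = l then 1 else 0 := fun k l =>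
    (hinner _ _).symm.trans (orthonormal_iff_ite.mp f.orthonormal k l)
  have hφ : Orthonormal 𝕜 fun k : {k : Fin s // 0 < σ k} => φ k := by
    rw [orthonormal_iff_ite]
    intro k l
    simp [hφON _ _ k.2 l.2, Subtype.ext_iff, Fin.val_inj]
  have hw : ∀ j, w j = ∑ k, (starRingEnd 𝕜) (b.repr (f k) j) • ((σ k : 𝕜) • φ k) :=
    eq_sum_conj_repr_smul_of_sum_smul_eq b γ (fun j => (hγ j).ne') hinner w f _ fun g => by
      simp only [← hK, hSVD, smul_smul, mul_comm]
  refine ⟨fun a sv η => ?_, sum_mul_norm_sq_sub_truncation_eq hF hσnn hφ hw r⟩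
  have : FiniteDimensional 𝕜 (Submodule.span 𝕜 (Set.range η)) :=
    FiniteDimensional.span_of_finite 𝕜 (Set.finite_range η)
  refine sum_le_sum_mul_norm_sq_sub_of_mem hF (fun j => (hγ j).le) hσmono hσnn hφ hw
    (Submodule.span 𝕜 (Set.range η)) ?_ fun j => ?_
  · simpa [Set.finrank] using finrank_range_le_card (R := 𝕜) η
  · exact sum_mem fun k _ => Submodule.smul_mem _ _ (Submodule.subset_span ⟨k, rfl⟩)

/-- Discrete POD optimality (0-based indexing; `Σ_{k>r}` is
the sum over `k : Fin s` with `r ≤ k`, trailing zero terms vanishing; `f_{k,j}`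
is the `j`-th component `b.repr (f k) j` of `f_k ∈ 𝕜^s`).  Every rank-at-most-`r`
approximation `z_j = Σ_{k<r} a_k (s_k)_j η_k` satisfies
`Σ_j γ_j ‖w_j − z_j‖² ≥ Σ_{k>r} σ_k²`, and equality is attained by the POD
approximation `w_j^r = Σ_{k<r} σ_k conj(f_{k,j}) φ_k (= Σ_{k<r} (w_j,φ_k) φ_k)`. -/
theorem stmt19
    {𝕜 : Type*} [RCLike 𝕜]
    {X S : Type*}
    [NormedAddCommGroup X] [InnerProductSpace 𝕜 X] [CompleteSpace X] [SecondCountableTopology X]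
    [NormedAddCommGroup S] [InnerProductSpace 𝕜 S] [CompleteSpace S]
    (s : ℕ) (hs : 0 < s)
    (b : Module.Basis (Fin s) 𝕜 S)
    (γ : Fin s → ℝ) (hγ : ∀ j, 0 < γ j)
    (hinner : ∀ u v : S, (inner 𝕜 u v : 𝕜) =
      ∑ j, (γ j : 𝕜) * (starRingEnd 𝕜) (b.repr u j) * (b.repr v j))
    (w : Fin s → X)
    (K : S →L[𝕜] X)
    (hK : ∀ g : S, K g = ∑ j, ((γ j : 𝕜) * (b.repr g j)) • w j)
    (σ : ℕ → ℝ) (hσmono : Antitone σ) (hσnn : ∀ k, 0 ≤ σ k)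
    (hσs : ∀ k, s ≤ k → σ k = 0)
    (f : OrthonormalBasis (Fin s) 𝕜 S)
    (φ : ℕ → X)
    (hφON : ∀ j k, 0 < σ j → 0 < σ k →
      (inner 𝕜 (φ j) (φ k) : 𝕜) = if j = k then 1 else 0)
    (hSVD : ∀ g : S, K g = ∑ k : Fin s, ((σ (k : ℕ) : 𝕜) * (inner 𝕜 (f k) g : 𝕜)) • φ (k : ℕ))
    (hKf : ∀ k : Fin s, 0 < σ (k : ℕ) → K (f k) = (σ (k : ℕ) : 𝕜) • φ (k : ℕ))
    (hKadj : ∀ k : Fin s, 0 < σ (k : ℕ) →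
      ContinuousLinearMap.adjoint K (φ (k : ℕ)) = (σ (k : ℕ) : 𝕜) • f k)
    (r : ℕ) (hr : 0 < r) :
    (∀ (a : Fin r → 𝕜) (sv : Fin r → S) (η : Fin r → X),
      (∑ k : Fin s, if r ≤ (k : ℕ) then σ (k : ℕ) ^ 2 else 0)
        ≤ ∑ j, γ j * ‖w j - ∑ k : Fin r, (a k * b.repr (sv k) j) • η k‖ ^ 2)
    ∧ (∑ j, γ j * ‖w j -
          ∑ k : Fin s, (if (k : ℕ) < r then
            ((σ (k : ℕ) : 𝕜) * (starRingEnd 𝕜) (b.repr (f k) j)) • φ (k : ℕ) else 0)‖ ^ 2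
        = ∑ k : Fin s, if r ≤ (k : ℕ) then σ (k : ℕ) ^ 2 else 0) :=
  stmt19_general s b γ hγ hinner w K hK σ hσmono hσnn f φ hφON hSVD r
end
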